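/- arXiv:2006.08501 — 2 statements merged into one kernel-verified Lean document; each statement's English description precedes it below -/
import Mathlib

section
/- Let A be a unital C*-algebra whose centre is nontrivial, i.e., there exists a ∈ A commuting with every element of A such that a is not a scalar multiple of the unit. Let K be a complex Hilbert space, let R ⊆ B(K) be an operator system, and let φ : R → A be a unital completely positive linear map. Then φ is not pure in the cone CP(R, A) of completely positive linear maps. -/
open scoped ComplexOrder InnerProductSpace

/-- An `m × m` matrix of operators on a Hilbert space `K` is positive if the
corresponding operator on the direct sum `K^{⊕m}` is positive, i.e. its quadratic
form is nonnegative. -/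
def OpMatPos {K : Type*} [NormedAddCommGroup K] [InnerProductSpace ℂ K] {m : ℕ}
    (x : Fin m → Fin m → (K →L[ℂ] K)) : Prop :=
  ∀ v : Fin m → K, 0 ≤ ∑ i, ∑ j, ⟪x i j (v j), v i⟫_ℂ

/-- A matrix over a C*-algebra `A` is positive when it is a positive element
of the C*-algebra `M_m(A)`, i.e. of the form `y* y`. -/
def MatPosAlg {A : Type*} [Ring A] [StarRing A] {m : ℕ}
    (x : Matrix (Fin m) (Fin m) A) : Prop :=
  ∃ y : Matrix (Fin m) (Fin m) A, x = star y * y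

/-- Complete positivity for a linear map from an operator system `R ⊆ B(K)` into a
C*-algebra `A`: positive `m × m` operator matrices with entries in `R` are sent
(entrywise) to positive elements of `M_m(A)`. -/
def IsCPtoAlg {K : Type*} [NormedAddCommGroup K] [InnerProductSpace ℂ K]
    {A : Type*} [Ring A] [StarRing A] [Module ℂ A]
    (R : Submodule ℂ (K →L[ℂ] K)) (φ : R →ₗ[ℂ] A) : Prop :=
  ∀ (m : ℕ) (x : Fin m → Fin m → R),
    OpMatPos (fun i j => (x i j : K →L[ℂ] K)) →
    MatPosAlg (Matrix.of fun i j => φ (x i j))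

/-!
Choose two distinct points `z₁ ≠ z₂` in the spectrum of the (normal) central element, and a
continuous `θ : ℂ → ℝ` with `θ z₁ = 0`, `θ z₂ = 1`. The central elements `w₁ = sin θ(a)` and
`w₂ = cos θ(a)` satisfy `w₁* w₁ + w₂* w₂ = 1`, and multiplying a completely positive map by
`w* w` with `w` central keeps it completely positive. So `φ = w₁* w₁ φ + w₂* w₂ φ` is a
decomposition in `CP(R, A)`; purity would force `w₁* w₁ = w₁* w₁ φ(1)` to be a scalar, which it
is not since `sin² θ` separates `z₁` from `z₂`.
-/

section CompletePositivity

variable {K : Type*} [NormedAddCommGroup K] [InnerProductSpace ℂ K]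
  {A : Type*} [Ring A] [StarRing A] [Algebra ℂ A]

theorem IsCPtoAlg.mulLeft_star_mul_self {R : Submodule ℂ (K →L[ℂ] K)} {φ : R →ₗ[ℂ] A}
    (hφ : IsCPtoAlg R φ) {w : A} (hw : ∀ b : A, Commute w b) :
    IsCPtoAlg R ((LinearMap.mulLeft ℂ (star w * w)).comp φ) := by
  intro m x hx
  obtain ⟨y, hy⟩ := hφ m x hx
  have hw_star_mul : ∀ b : A, Commute (star w * w) b := fun b =>
    (by simpa using (hw (star b)).star_star : Commute (star w) b).mul_left (hw b)
  have hstar_scalar : star (Matrix.scalar (Fin m) w) = Matrix.scalar (Fin m) (star w) := by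
    simp [Matrix.star_eq_conjTranspose, Matrix.scalar_apply, Matrix.diagonal_conjTranspose]
  refine ⟨Matrix.scalar (Fin m) w * y, ?_⟩
  calc Matrix.of (fun i j => star w * w * φ (x i j))
      = Matrix.scalar (Fin m) (star w * w) * (star y * y) := by
        rw [← hy]; ext i j; simp [Matrix.scalar_apply, Matrix.diagonal_mul]
    _ = star y * Matrix.scalar (Fin m) (star w * w) * y := by
        rw [← mul_assoc, Matrix.scalar_commute _ hw_star_mul]
    _ = star (Matrix.scalar (Fin m) w * y) * (Matrix.scalar (Fin m) w * y) := by
        rw [star_mul, hstar_scalar, map_mul]; noncomm_ring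

end CompletePositivity

section CStarAlgebra

variable {A : Type*} [CStarAlgebra A]

theorem exists_ne_mem_spectrum_of_ne_smul_one {a : A} [IsStarNormal a]
    (ha : ∀ z : ℂ, a ≠ z • 1) : ∃ z₁ ∈ spectrum ℂ a, ∃ z₂ ∈ spectrum ℂ a, z₁ ≠ z₂ := by
  have : Nontrivial A := ⟨⟨a, 0, by simpa using ha 0⟩⟩
  obtain ⟨z₁, hz₁⟩ := spectrum.nonempty a
  refine ⟨z₁, hz₁, ?_⟩
  by_contra! h
  refine ha z₁ ?_
  rw [← Algebra.algebraMap_eq_smul_one]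
  exact CFC.eq_algebraMap_of_spectrum_subset_singleton a z₁ fun z hz => (h z hz).symm

theorem star_cfc_ofReal_mul_self (f : ℂ → ℝ) (hf : Continuous f) (a : A) [IsStarNormal a] :
    star (cfc (fun z => (f z : ℂ)) a) * cfc (fun z => (f z : ℂ)) a
      = cfc (fun z => ((f z ^ 2 : ℝ) : ℂ)) a := by
  rw [← cfc_star, ← cfc_mul _ _ a (by fun_prop) (by fun_prop)]
  simp [sq]

theorem exists_central_star_mul_self_add_eq_one {a : A} (ha_central : ∀ b : A, Commute a b)
    (ha : ∀ z : ℂ, a ≠ z • 1) :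
    ∃ w₁ w₂ : A, (∀ b : A, Commute w₁ b) ∧ (∀ b : A, Commute w₂ b) ∧
      star w₁ * w₁ + star w₂ * w₂ = 1 ∧ ∀ s : ℂ, star w₁ * w₁ ≠ s • 1 := by
  have ha_star_central : ∀ b : A, Commute (star a) b := fun b => by
    simpa using (ha_central (star b)).star_star
  have : IsStarNormal a := ⟨ha_star_central a⟩
  obtain ⟨z₁, hz₁, z₂, hz₂, hne⟩ := exists_ne_mem_spectrum_of_ne_smul_one ha
  set θ : ℂ → ℝ := fun z => ‖z - z₁‖ / ‖z₂ - z₁‖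
  have hθ₁ : θ z₁ = 0 := by simp [θ]
  have hθ₂ : θ z₂ = 1 := div_self (norm_ne_zero_iff.mpr (sub_ne_zero.mpr hne.symm))
  refine ⟨cfc (fun z => (Real.sin (θ z) : ℂ)) a, cfc (fun z => (Real.cos (θ z) : ℂ)) a,
    fun b => (ha_central b).cfc (ha_star_central b) _,
    fun b => (ha_central b).cfc (ha_star_central b) _, ?_, fun s hs => ?_⟩
  · rw [star_cfc_ofReal_mul_self _ (by fun_prop), star_cfc_ofReal_mul_self _ (by fun_prop),
      ← cfc_add .., ← cfc_one ℂ a]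
    exact cfc_congr fun z _ => by simp
  · rw [star_cfc_ofReal_mul_self _ (by fun_prop), ← Algebra.algebraMap_eq_smul_one,
      ← cfc_const s a, cfc_eq_cfc_iff_eqOn] at hs
    have hsin : Real.sin (θ z₁) ^ 2 = Real.sin (θ z₂) ^ 2 :=
      Complex.ofReal_injective ((hs hz₁).trans (hs hz₂).symm)
    rw [hθ₁, hθ₂, Real.sin_zero, zero_pow two_ne_zero, eq_comm, sq_eq_zero_iff] at hsin
    exact (Real.sin_pos_of_pos_of_lt_pi one_pos (by linarith [Real.pi_gt_three])).ne' hsin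

end CStarAlgebra

theorem ucp_map_into_algebra_with_nontrivial_centre_is_not_pure_general
    {A : Type*} [NormedRing A] [StarRing A] [CStarRing A] [CompleteSpace A]
    [NormedAlgebra ℂ A] [StarModule ℂ A]
    {K : Type*} [NormedAddCommGroup K] [InnerProductSpace ℂ K]
    (a : A) (ha_central : ∀ b : A, a * b = b * a) (ha_nonscalar : ∀ lam : ℂ, a ≠ lam • 1)
    (R : Submodule ℂ (K →L[ℂ] K)) (hR1 : (1 : K →L[ℂ] K) ∈ R)
    (φ : R →ₗ[ℂ] A) (hφcp : IsCPtoAlg R φ) (hφ1 : φ ⟨1, hR1⟩ = 1) :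
    ¬ (∀ ϑ ω : R →ₗ[ℂ] A, IsCPtoAlg R ϑ → IsCPtoAlg R ω → ϑ + ω = φ →
        ∃ s : ℝ, 0 ≤ s ∧ s ≤ 1 ∧ ϑ = (s : ℂ) • φ ∧ ω = ((1 - s : ℝ) : ℂ) • φ) := by
  intro hpure
  let _ : CStarAlgebra A := {}
  obtain ⟨w₁, w₂, hw₁, hw₂, hsum, hw₁_nonscalar⟩ :=
    exists_central_star_mul_self_add_eq_one ha_central ha_nonscalar
  have hsplit : (LinearMap.mulLeft ℂ (star w₁ * w₁)).comp φ
      + (LinearMap.mulLeft ℂ (star w₂ * w₂)).comp φ = φ := by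
    ext x
    simp only [LinearMap.add_apply, LinearMap.comp_apply, LinearMap.mulLeft_apply, ← add_mul,
      hsum, one_mul]
  obtain ⟨s, -, -, hϑ, -⟩ := hpure _ _ (hφcp.mulLeft_star_mul_self hw₁)
    (hφcp.mulLeft_star_mul_self hw₂) hsplit
  exact hw₁_nonscalar s (by simpa [hφ1] using LinearMap.congr_fun hϑ ⟨1, hR1⟩)

/-- If a unital C*-algebra `A` has nontrivial centre, then no unital completely positive
map `φ : R → A` from an operator system `R ⊆ B(K)` is pure in `CP(R, A)`. -/
theorem ucp_map_into_algebra_with_nontrivial_centre_is_not_pure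
    {A : Type*} [NormedRing A] [StarRing A] [CStarRing A] [CompleteSpace A]
    [NormedAlgebra ℂ A] [StarModule ℂ A]
    {K : Type*} [NormedAddCommGroup K] [InnerProductSpace ℂ K] [CompleteSpace K]
    (a : A) (ha_central : ∀ b : A, a * b = b * a) (ha_nonscalar : ∀ lam : ℂ, a ≠ lam • 1)
    (R : Submodule ℂ (K →L[ℂ] K)) (hR1 : (1 : K →L[ℂ] K) ∈ R)
    (hRstar : ∀ x ∈ R, star x ∈ R)
    (φ : R →ₗ[ℂ] A) (hφcp : IsCPtoAlg R φ) (hφ1 : φ ⟨1, hR1⟩ = 1) :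
    ¬ (∀ ϑ ω : R →ₗ[ℂ] A, IsCPtoAlg R ϑ → IsCPtoAlg R ω → ϑ + ω = φ →
        ∃ s : ℝ, 0 ≤ s ∧ s ≤ 1 ∧ ϑ = (s : ℂ) • φ ∧ ω = ((1 - s : ℝ) : ℂ) • φ) :=
  ucp_map_into_algebra_with_nontrivial_centre_is_not_pure_general a ha_central ha_nonscalar R hR1 φ
    hφcp hφ1
end

section
/- Let T = X_1 = { [[α, β₁],[β₂, α]] : α, β₁, β₂ ∈ ℂ } ⊆ M_2(ℂ) and let R = { [[α, β],[β, α]] : α, β ∈ ℂ } ⊆ T, an operator subsystem of T of linear codimension 1. Then the inclusion map R ↪ T (the restriction to R of the identity map on T) is not pure in the cone CP(R, T): there exist completely positive linear maps ϑ, ω : R → T with ϑ + ω equal to the inclusion map, such that ϑ is not a nonnegative scalar multiple of the inclusion map. (Hence the restriction of a pure completely positive map to an operator subsystem of codimension 1 need not be pure.) -/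
/-!
Every element of `R` is a polynomial in the swap `J = [[0, 1], [1, 0]]`, so it commutes with
the spectral projections `P± = (1 ± J) / 2`, and hence `x = P₊ x P₊ + P₋ x P₋` on `R`. Each
compression `y ↦ P± y P±` is completely positive and lands in `T`, because `P± y P±` has equal
diagonal entries for every `y`. But `P₊ (·) P₊` sends `1` to `P₊`, which is not a multiple of `1`.
-/

open scoped ComplexOrder

/-- The `(2m) × (2m)` matrix obtained from an `m × m` array of `2 × 2` matrices. -/
def blockMat {m : ℕ} (x : Fin m → Fin m → Matrix (Fin 2) (Fin 2) ℂ) :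
    Matrix (Fin m × Fin 2) (Fin m × Fin 2) ℂ :=
  Matrix.of fun p q => x p.1 q.1 p.2 q.2

/-- Complete positivity for a linear map between matrix operator systems in `M₂(ℂ)`. -/
def IsCP (S T : Submodule ℂ (Matrix (Fin 2) (Fin 2) ℂ)) (φ : S →ₗ[ℂ] T) : Prop :=
  ∀ (m : ℕ) (x : Fin m → Fin m → S),
    (blockMat fun i j => (x i j : Matrix (Fin 2) (Fin 2) ℂ)).PosSemidef →
    (blockMat fun i j => (φ (x i j) : Matrix (Fin 2) (Fin 2) ℂ)).PosSemidef

/-- The operator system `T = X₁ = { [[α, β₁],[β₂, α]] } ⊆ M₂(ℂ)`. -/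
noncomputable def TSys : Submodule ℂ (Matrix (Fin 2) (Fin 2) ℂ) :=
  Submodule.span ℂ {x | ∃ α β₁ β₂ : ℂ, x = !![α, β₁; β₂, α]}

/-- The operator subsystem `R = { [[α, β],[β, α]] } ⊆ T` of codimension `1`. -/
noncomputable def RSys : Submodule ℂ (Matrix (Fin 2) (Fin 2) ℂ) :=
  Submodule.span ℂ {x | ∃ α β : ℂ, x = !![α, β; β, α]}

theorem RSys_le_TSys : RSys ≤ TSys := by
  apply Submodule.span_mono
  rintro x ⟨α, β, rfl⟩
  exact ⟨α, β, β, rfl⟩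

open scoped Matrix Kronecker

lemma blockMat_conjTranspose_mul_mul {m : ℕ} (P : Matrix (Fin 2) (Fin 2) ℂ)
    (x : Fin m → Fin m → Matrix (Fin 2) (Fin 2) ℂ) :
    blockMat (fun i j => Pᴴ * x i j * P) = (1 ⊗ₖ P)ᴴ * blockMat x * (1 ⊗ₖ P) := by
  ext ⟨i, a⟩ ⟨j, b⟩
  simp [blockMat, Matrix.mul_apply, Matrix.kroneckerMap_apply, Matrix.one_apply,
    Fintype.sum_prod_type, apply_ite, mul_comm]

def compress (S T : Submodule ℂ (Matrix (Fin 2) (Fin 2) ℂ)) (P : Matrix (Fin 2) (Fin 2) ℂ)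
    (hP : ∀ x ∈ S, Pᴴ * x * P ∈ T) : S →ₗ[ℂ] T where
  toFun x := ⟨Pᴴ * x * P, hP x x.2⟩
  map_add' x y := by ext1; simp [mul_add, add_mul]
  map_smul' c x := by ext1; simp

lemma isCP_compress (S T : Submodule ℂ (Matrix (Fin 2) (Fin 2) ℂ))
    (P : Matrix (Fin 2) (Fin 2) ℂ) (hP : ∀ x ∈ S, Pᴴ * x * P ∈ T) :
    IsCP S T (compress S T P hP) := by
  intro m x hx
  change (blockMat fun i j => Pᴴ * x i j * P).PosSemidef
  rw [blockMat_conjTranspose_mul_mul]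
  exact hx.conjTranspose_mul_mul_same _

lemma mem_TSys_of_apply_zero_zero_eq {x : Matrix (Fin 2) (Fin 2) ℂ} (h : x 0 0 = x 1 1) :
    x ∈ TSys :=
  Submodule.subset_span ⟨x 0 0, x 0 1, x 1 0, (Matrix.eta_fin_two x).trans (by rw [h])⟩

def swapMat : Matrix (Fin 2) (Fin 2) ℂ := !![0, 1; 1, 0]

lemma commute_swapMat_of_mem_RSys {x : Matrix (Fin 2) (Fin 2) ℂ} (hx : x ∈ RSys) :
    Commute x swapMat := by
  suffices RSys ≤ (Subalgebra.centralizer ℂ {swapMat}).toSubmodule from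
    (Subalgebra.mem_centralizer_iff ℂ).mp (this hx) _ rfl |>.symm
  refine Submodule.span_le.mpr ?_
  rintro _ ⟨α, β, rfl⟩
  simp only [SetLike.mem_coe, Subalgebra.mem_toSubmodule, Subalgebra.mem_centralizer_iff,
    Set.mem_singleton_iff, forall_eq, swapMat, Matrix.mul_fin_two]
  simp

lemma swapMat_mul_self : swapMat * swapMat = 1 := by
  simp [swapMat, Matrix.one_fin_two]

lemma isHermitian_swapMat : swapMat.IsHermitian := by
  ext i j
  fin_cases i <;> fin_cases j <;> simp [swapMat]

noncomputable def specProj (ε : ℝ) : Matrix (Fin 2) (Fin 2) ℂ :=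
  (2⁻¹ : ℂ) • (1 + (ε : ℂ) • swapMat)

lemma specProj_add_specProj_neg (ε : ℝ) : specProj ε + specProj (-ε) = 1 := by
  rw [specProj, specProj, ← smul_add]
  push_cast
  rw [neg_smul, add_add_add_comm, add_neg_cancel, add_zero, ← two_smul ℂ (1 : Matrix _ _ _),
    smul_smul]
  norm_num

lemma isHermitian_specProj (ε : ℝ) : (specProj ε).IsHermitian := by
  simp [specProj, Matrix.IsHermitian, Matrix.conjTranspose_smul, isHermitian_swapMat.eq]

lemma isIdempotentElem_specProj {ε : ℝ} (hε : ε ^ 2 = 1) : IsIdempotentElem (specProj ε) := by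
  have hε' : (ε : ℂ) * ε = 1 := by exact_mod_cast (sq ε).symm.trans hε
  rw [IsIdempotentElem, specProj, smul_mul_smul, add_mul, mul_add, mul_add, smul_mul_smul,
    swapMat_mul_self, hε']
  simp only [one_mul, mul_one, mul_smul_comm, one_smul]
  module

lemma specProj_eq (ε : ℝ) : specProj ε = !![(2⁻¹ : ℂ), ε / 2; ε / 2, 2⁻¹] := by
  ext i j
  fin_cases i <;> fin_cases j <;> simp [specProj, swapMat, div_eq_inv_mul]

lemma specProj_conj_mem_TSys {ε : ℝ} (hε : ε ^ 2 = 1) (x : Matrix (Fin 2) (Fin 2) ℂ) :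
    (specProj ε)ᴴ * x * specProj ε ∈ TSys := by
  have hε' : (ε : ℂ) ^ 2 = 1 := by exact_mod_cast hε
  apply mem_TSys_of_apply_zero_zero_eq
  rw [(isHermitian_specProj ε).eq, specProj_eq]
  simp only [Matrix.mul_apply, Fin.sum_univ_two, Matrix.of_apply, Matrix.cons_val',
    Matrix.cons_val_zero, Matrix.cons_val_one, Matrix.cons_val_fin_one]
  linear_combination (4⁻¹ * (x 1 1 - x 0 0)) * hε'

lemma commute_specProj_of_mem_RSys {x : Matrix (Fin 2) (Fin 2) ℂ} (hx : x ∈ RSys) (ε : ℝ) :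
    Commute x (specProj ε) :=
  ((Commute.one_right x).add_right ((commute_swapMat_of_mem_RSys hx).smul_right _)).smul_right _

lemma specProj_conj_eq_mul_of_mem_RSys {x : Matrix (Fin 2) (Fin 2) ℂ} (hx : x ∈ RSys) {ε : ℝ}
    (hε : ε ^ 2 = 1) : (specProj ε)ᴴ * x * specProj ε = x * specProj ε := by
  rw [(isHermitian_specProj ε).eq, (commute_specProj_of_mem_RSys hx ε).symm.eq, mul_assoc,
    (isIdempotentElem_specProj hε).eq]

lemma conj_specProj_add_conj_specProj_neg {x : Matrix (Fin 2) (Fin 2) ℂ} (hx : x ∈ RSys)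
    {ε : ℝ} (hε : ε ^ 2 = 1) :
    (specProj ε)ᴴ * x * specProj ε + (specProj (-ε))ᴴ * x * specProj (-ε) = x := by
  rw [specProj_conj_eq_mul_of_mem_RSys hx hε,
    specProj_conj_eq_mul_of_mem_RSys hx ((neg_sq ε).trans hε), ← mul_add,
    specProj_add_specProj_neg, mul_one]

/-- The inclusion map `R ↪ T` (the restriction to `R` of the identity map on `T`) is not
pure in `CP(R, T)`: it decomposes as a sum of two completely positive maps, neither of
which is a nonnegative multiple of the inclusion.  In particular the restriction of a
pure completely positive map to an operator subsystem of codimension `1` need not be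
pure. -/
theorem inclusion_of_RSys_into_TSys_is_not_pure :
    ∃ ϑ ω : RSys →ₗ[ℂ] TSys, IsCP RSys TSys ϑ ∧ IsCP RSys TSys ω ∧
      ϑ + ω = Submodule.inclusion RSys_le_TSys ∧
      ∀ s : ℝ, 0 ≤ s → ϑ ≠ (s : ℂ) • Submodule.inclusion RSys_le_TSys := by
  have hplus : (1 : ℝ) ^ 2 = 1 := one_pow 2
  have hminus : (-1 : ℝ) ^ 2 = 1 := by norm_num
  refine ⟨compress RSys TSys (specProj 1) fun x _ => specProj_conj_mem_TSys hplus x,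
    compress RSys TSys (specProj (-1)) fun x _ => specProj_conj_mem_TSys hminus x,
    isCP_compress _ _ _ _, isCP_compress _ _ _ _,
    LinearMap.ext fun x => Subtype.ext (conj_specProj_add_conj_specProj_neg x.2 hplus), ?_⟩
  intro s _ h
  have h1 : (1 : Matrix (Fin 2) (Fin 2) ℂ) ∈ RSys :=
    Submodule.subset_span ⟨1, 0, Matrix.one_fin_two⟩
  have hP : (specProj 1)ᴴ * 1 * specProj 1 = (s : ℂ) • 1 :=
    congrArg (fun f => (f ⟨1, h1⟩ : Matrix (Fin 2) (Fin 2) ℂ)) h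
  rw [specProj_conj_eq_mul_of_mem_RSys h1 hplus, one_mul] at hP
  simpa [specProj, swapMat] using congrFun (congrFun hP 0) 1
end
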